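/- Fix a composition μ of length n and 1 ≤ i ≤ n. Consider the sequence of rational functions a_m(q,t) = q^{μ_i} t^{n+m+1-β_{μ*0^m}(i)} in Q(q,t) (the eigenvalue of the Cherednik operator times t^{n+m}). Then with respect to the t-adic topology on Q(q,t): if μ_i ≠ 0 the sequence is eventually constant equal to q^{μ_i} t^{n+1-β_μ(i)}, and if μ_i = 0 the sequence converges to 0. -/

import Mathlib

open Finset

/-- `β_ν(i)` for a composition `ν` of length `N`. -/
def compBeta {N : ℕ} (ν : Fin N → ℕ) (i : Fin N) : ℕ :=
  (univ.filter (fun j : Fin N => j ≤ i ∧ ν j ≤ ν i)).card +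
  (univ.filter (fun j : Fin N => i < j ∧ ν j < ν i)).card

/-- The composition `μ * 0^m`. -/
def appendZeros {n : ℕ} (μ : Fin n → ℕ) (m : ℕ) : Fin (n + m) → ℕ :=
  fun j => if h : (j : ℕ) < n then μ ⟨j, h⟩ else 0

/-- The field `ℚ(q,t)`, realized as rational functions in `t` over `ℚ(q)`. -/
abbrev Qqt : Type := RatFunc (RatFunc ℚ)

/-- The variable `q` of `ℚ(q,t)`. -/
noncomputable def qq : Qqt := RatFunc.C RatFunc.X

/-- The variable `t` of `ℚ(q,t)`. -/
noncomputable def tt : Qqt := RatFunc.X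

/-- The `t`-adic valuation (order of vanishing at `t = 0`) of a rational function in `t`. -/
noncomputable def tOrd {K : Type*} [Field K] (f : RatFunc K) : ℤ :=
  (Polynomial.rootMultiplicity 0 f.num : ℤ) - (Polynomial.rootMultiplicity 0 f.denom : ℤ)

/-- Convergence of a sequence in the `t`-adic topology: the `t`-adic valuation of the
difference tends to infinity. -/
def TAdicConv {K : Type*} [Field K] (a : ℕ → RatFunc K) (L : RatFunc K) : Prop :=
  ∀ N : ℤ, ∃ M : ℕ, ∀ m ≥ M, a m = L ∨ N ≤ tOrd (a m - L)

/-! Appending zeros to `μ` puts them to the right of position `i`, and they are strictly smaller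
than `μ_i` exactly when `μ_i ≠ 0`; hence `β_{μ*0^m}(i) = β_μ(i) + m·[μ_i ≠ 0]`. For `μ_i ≠ 0` the
exponent of `t` therefore does not depend on `m`, while for `μ_i = 0` it is `n + m + 1 - β_μ(i)`,
which is at least `m + 1` because `β_μ(i) ≤ n`. -/

section compBeta

variable {n : ℕ} (μ : Fin n → ℕ)

@[simp]
lemma appendZeros_castAdd (m : ℕ) (j : Fin n) : appendZeros μ m (Fin.castAdd m j) = μ j := by
  simp [appendZeros]

@[simp]
lemma appendZeros_natAdd {m : ℕ} (j : Fin m) : appendZeros μ m (Fin.natAdd n j) = 0 := by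
  simp [appendZeros]

lemma compBeta_appendZeros_castAdd (m : ℕ) (i : Fin n) :
    compBeta (appendZeros μ m) (Fin.castAdd m i) =
      compBeta μ i + if μ i = 0 then 0 else m := by
  simp only [compBeta, card_filter, Fin.sum_univ_add, appendZeros_castAdd, appendZeros_natAdd,
    Fin.le_def, Fin.lt_def, Fin.val_castAdd, Fin.val_natAdd]
  have hle (j : Fin m) : ¬ n + (j : ℕ) ≤ i := by omega
  have hlt (j : Fin m) : (i : ℕ) < n + j := by omega
  rcases eq_or_ne (μ i) 0 with h | h <;> simp [hle, hlt, h, Nat.pos_of_ne_zero, add_assoc]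

lemma compBeta_le (i : Fin n) : compBeta μ i ≤ n := by
  calc compBeta μ i
      ≤ #(univ.filter fun j => j ≤ i ∧ μ j ≤ μ i) +
          #(univ.filter fun j => ¬ (j ≤ i ∧ μ j ≤ μ i)) := by
        refine Nat.add_le_add_left (card_le_card fun j => ?_) _
        simp only [mem_filter, mem_univ, true_and, not_and, not_le]
        exact fun hlt hji => (hji.not_gt hlt.1).elim
    _ = n := by rw [card_filter_add_card_filter_not, card_univ, Fintype.card_fin]

end compBeta

lemma tOrd_X_pow {K : Type*} [Field K] (e : ℕ) : tOrd ((RatFunc.X : RatFunc K) ^ e) = e := by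
  rw [tOrd, ← RatFunc.algebraMap_X, ← map_pow, RatFunc.num_algebraMap, RatFunc.denom_algebraMap,
    ← Polynomial.C_1, Polynomial.rootMultiplicity_C]
  simpa using Polynomial.rootMultiplicity_X_sub_C_pow (0 : K) e

/-- For a composition `μ` of length `n` and `1 ≤ i ≤ n`, the sequence
`a_m = q^{μ_i} t^{n+m+1-β_{μ*0^m}(i)}`: if `μ_i ≠ 0` it is eventually constant equal to
`q^{μ_i} t^{n+1-β_μ(i)}`, and if `μ_i = 0` it converges `t`-adically to `0`. -/
theorem cherednik_eigenvalue_limit {n : ℕ} (μ : Fin n → ℕ) (i : Fin n) :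
    (μ i ≠ 0 → ∃ M : ℕ, ∀ m ≥ M,
      qq ^ (μ i) * tt ^ (n + m + 1 - compBeta (appendZeros μ m) (Fin.castAdd m i)) =
        qq ^ (μ i) * tt ^ (n + 1 - compBeta μ i)) ∧
    (μ i = 0 → TAdicConv
      (fun m => qq ^ (μ i) * tt ^ (n + m + 1 - compBeta (appendZeros μ m) (Fin.castAdd m i)))
      0) := by
  refine ⟨fun hμ => ⟨0, fun m _ => ?_⟩, fun hμ N => ⟨N.toNat, fun m hm => Or.inr ?_⟩⟩
  · rw [compBeta_appendZeros_castAdd, if_neg hμ, Nat.add_right_comm, Nat.add_sub_add_right]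
  · dsimp only
    rw [compBeta_appendZeros_castAdd, if_pos hμ, hμ, pow_zero, one_mul, sub_zero, add_zero, tt,
      tOrd_X_pow]
    have := compBeta_le μ i
    omega
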